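/- Let G be a graph, M a multiset of positive integers, and A, B ⊆ V(G) with m(A) = m(B) = M. If A and B are reconfigurable under the component sliding rule CS, then A and B are reconfigurable under the component jumping rule CJ, and also A and B are reconfigurable under the token jumping rule TJ (where consecutive subsets U, U' satisfy |U \ U'| = |U' \ U| = 1), in both cases keeping every intermediate subset's CC-multiset equal to M. -/

import Mathlib

open scoped Classical

noncomputable section

/-- `U` induces a connected subgraph of `G`. -/
def IsConnSub {V : Type*} (G : SimpleGraph V) (U : Finset V) : Prop :=
  (G.induce (U : Set V)).Connected

/-- The set of connected components of a vertex subset `U`: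
maximal subsets of `U` inducing connected subgraphs. -/
def comps {V : Type*} [Fintype V] [DecidableEq V] (G : SimpleGraph V) (U : Finset V) :
    Finset (Finset V) :=
  Finset.univ.filter (fun C => C ⊆ U ∧ IsConnSub G C ∧
    ∀ D : Finset V, C ⊆ D → D ⊆ U → IsConnSub G D → D = C)

/-- The CC-multiset of `U`: the multiset of sizes of connected components of `U`. -/
def ccMultiset {V : Type*} [Fintype V] [DecidableEq V] (G : SimpleGraph V) (U : Finset V) :
    Multiset ℕ :=
  (comps G U).val.map Finset.card

/-- Adjacency under component jumping (CJ). -/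
def adjCJ {V : Type*} [Fintype V] [DecidableEq V] (G : SimpleGraph V) (U U' : Finset V) : Prop :=
  ccMultiset G U = ccMultiset G U' ∧
  (comps G U \ comps G U').card = 1 ∧ (comps G U' \ comps G U).card = 1

/-- Adjacency under component sliding (CS). -/
def adjCS {V : Type*} [Fintype V] [DecidableEq V] (G : SimpleGraph V) (U U' : Finset V) : Prop :=
  adjCJ G U U' ∧
  ∀ C ∈ comps G U \ comps G U', ∀ C' ∈ comps G U' \ comps G U, IsConnSub G (C ∪ C')

/-- Adjacency under CS1 (component sliding by one vertex). -/
def adjCS1 {V : Type*} [Fintype V] [DecidableEq V] (G : SimpleGraph V) (U U' : Finset V) : Prop :=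
  adjCS G U U' ∧
  ∀ C ∈ comps G U \ comps G U', ∀ C' ∈ comps G U' \ comps G U,
    (C \ C').card = 1 ∧ (C' \ C).card = 1

/-- Adjacency under token jumping (TJ). -/
def adjTJ {V : Type*} [DecidableEq V] (G : SimpleGraph V) (U U' : Finset V) : Prop :=
  (U \ U').card = 1 ∧ (U' \ U).card = 1

/-- `A` and `B` are reconfigurable under rule `R` keeping the CC-multiset equal to `M`. -/
def Reconf {V : Type*} [Fintype V] [DecidableEq V] (G : SimpleGraph V) (M : Multiset ℕ)
    (R : Finset V → Finset V → Prop) (A B : Finset V) : Prop :=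
  ∃ (ℓ : ℕ) (W : ℕ → Finset V), W 0 = A ∧ W ℓ = B ∧
    (∀ i ≤ ℓ, ccMultiset G (W i) = M) ∧ ∀ i < ℓ, R (W i) (W (i + 1))

end

/-!
A CS move exchanges one component `C` for a component `C'` of the same size with `C ∪ C'`
connected and leaves the rest `A` untouched; in particular it is a CJ move. To perform it by
token jumps, move `C` to `C'` one vertex at a time through connected `|C|`-subsets `X` of
`C ∪ C'`: no such `X` meets or touches `A`, so the components of `A ∪ X` are `X` and those of
`A`, and the CC-multiset stays the same.

Any two connected `n`-subsets of a connected set `W` are linked in this way. Rank the vertices of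
`W` injectively so that every vertex but a root has a lower-ranked neighbour in `W`. A connected
set that is not an initial segment of the ranking can trade a vertex for a lower-ranked one and
stay connected, by dropping a non-cut vertex away from the part through which the new vertex is
attached. The rank sum drops, so every connected `n`-subset reaches the unique initial segment of
size `n`.
-/

open Finset Relation

section Reach

variable {V : Type*} {G : SimpleGraph V}

def ReachIn (G : SimpleGraph V) (S : Finset V) (a b : V) : Prop :=
  ∃ w : G.Walk a b, ∀ x ∈ w.support, x ∈ S

namespace ReachIn

variable {S T : Finset V} {a b c : V}

lemma refl (ha : a ∈ S) : ReachIn G S a a :=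
  ⟨.nil, by simpa using ha⟩

lemma of_adj (ha : a ∈ S) (hb : b ∈ S) (hab : G.Adj a b) : ReachIn G S a b :=
  ⟨hab.toWalk, by simp [ha, hb]⟩

lemma symm (h : ReachIn G S a b) : ReachIn G S b a :=
  let ⟨w, hw⟩ := h; ⟨w.reverse, by simpa using hw⟩

lemma trans (h : ReachIn G S a b) (h' : ReachIn G S b c) : ReachIn G S a c := by
  obtain ⟨w, hw⟩ := h
  obtain ⟨w', hw'⟩ := h'
  exact ⟨w.append w', fun x hx =>
    ((w.mem_support_append_iff w').1 hx).elim (hw x) (hw' x)⟩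

lemma mono (hST : S ⊆ T) (h : ReachIn G S a b) : ReachIn G T a b :=
  let ⟨w, hw⟩ := h; ⟨w, fun x hx => hST (hw x hx)⟩

lemma of_descent {D Q : Finset V} {ρ : V} (r : V → ℕ) (hQ : ∀ x ∈ Q, ReachIn G D x ρ)
    (hdesc : ∀ x ∈ D, x ∉ Q → ∃ y ∈ D, G.Adj x y ∧ r y < r x) :
    ∀ x ∈ D, ReachIn G D x ρ := by
  intro x
  induction hx : r x using Nat.strong_induction_on generalizing x with
  | _ n ih =>
    intro hxD
    by_cases hxQ : x ∈ Q
    · exact hQ x hxQ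
    obtain ⟨y, hyD, hxy, hr⟩ := hdesc x hxD hxQ
    exact (of_adj hxD hyD hxy).trans (ih _ (hx ▸ hr) y rfl hyD)

end ReachIn

lemma isConnSub_iff {S : Finset V} :
    IsConnSub G S ↔ S.Nonempty ∧ ∀ a ∈ S, ∀ b ∈ S, ReachIn G S a b := by
  rw [IsConnSub, SimpleGraph.connected_induce_iff,
    SimpleGraph.Subgraph.connected_iff_forall_exists_walk_subgraph]
  refine and_congr (by simp [Finset.Nonempty]) ⟨fun h a ha b hb => ?_, fun h a b ha hb => ?_⟩
  · obtain ⟨p, hp⟩ := h (by simpa using ha) (by simpa using hb)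
    exact ⟨p, fun x hx => by simpa using hp.1 (by simpa using hx)⟩
  · obtain ⟨p, hp⟩ := h a (by simpa using ha) b (by simpa using hb)
    refine ⟨p, fun x hx => by simpa using hp x (by simpa using hx), fun x y hxy => ?_⟩
    have hx := p.toSubgraph.edge_vert hxy
    have hy := p.toSubgraph.edge_vert hxy.symm
    simp only [SimpleGraph.Walk.verts_toSubgraph] at hx hy
    exact ⟨by simpa using hp x hx, by simpa using hp y hy, p.toSubgraph.adj_sub hxy⟩

lemma IsConnSub.nonempty {S : Finset V} (h : IsConnSub G S) : S.Nonempty :=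
  (isConnSub_iff.1 h).1

lemma IsConnSub.reachIn {S : Finset V} (h : IsConnSub G S) {a b : V} (ha : a ∈ S)
    (hb : b ∈ S) : ReachIn G S a b :=
  (isConnSub_iff.1 h).2 a ha b hb

lemma isConnSub_of_reachIn {S : Finset V} {ρ : V} (hρ : ρ ∈ S)
    (h : ∀ x ∈ S, ReachIn G S x ρ) : IsConnSub G S :=
  isConnSub_iff.2 ⟨⟨ρ, hρ⟩, fun a ha b hb => (h a ha).trans (h b hb).symm⟩

lemma isConnSub_singleton (v : V) : IsConnSub G {v} :=
  isConnSub_of_reachIn (mem_singleton_self v) fun x hx => by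
    rw [mem_singleton.1 hx]; exact .refl (mem_singleton_self v)

variable [DecidableEq V]

lemma IsConnSub.union {S T : Finset V} (hS : IsConnSub G S) (hT : IsConnSub G T) {x y : V}
    (hx : x ∈ S) (hy : y ∈ T) (hxy : ReachIn G (S ∪ T) x y) : IsConnSub G (S ∪ T) := by
  refine isConnSub_of_reachIn (mem_union_left T hx) fun c hc => ?_
  rcases mem_union.1 hc with hc | hc
  · exact (hS.reachIn hc hx).mono subset_union_left
  · exact ((hT.reachIn hc hy).mono subset_union_right).trans hxy.symm

lemma IsConnSub.insert_of_adj {S : Finset V} (hS : IsConnSub G S) {q v : V} (hq : q ∈ S)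
    (hqv : G.Adj q v) : IsConnSub G (insert v S) := by
  rw [insert_eq, union_comm]
  exact hS.union (isConnSub_singleton v) hq (mem_singleton_self v)
    (.of_adj (mem_union_left _ hq) (mem_union_right _ (mem_singleton_self v)) hqv)

end Reach

section Descent

variable {V : Type*} {G : SimpleGraph V}

noncomputable def distIn (G : SimpleGraph V) (S : Finset V) (a b : V) : ℕ :=
  sInf {n | ∃ w : G.Walk a b, w.length = n ∧ ∀ x ∈ w.support, x ∈ S}

lemma distIn_le {S : Finset V} {a b : V} (w : G.Walk a b) (hw : ∀ x ∈ w.support, x ∈ S) :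
    distIn G S a b ≤ w.length :=
  Nat.sInf_le ⟨w, rfl, hw⟩

lemma ReachIn.exists_walk_length_eq_distIn {S : Finset V} {a b : V} (h : ReachIn G S a b) :
    ∃ w : G.Walk a b, w.length = distIn G S a b ∧ ∀ x ∈ w.support, x ∈ S :=
  let ⟨w, hw⟩ := h
  Nat.sInf_mem (s := {n | ∃ w : G.Walk a b, w.length = n ∧ ∀ x ∈ w.support, x ∈ S})
    ⟨w.length, w, rfl, hw⟩

def IsDescending (G : SimpleGraph V) (W : Finset V) (ρ : V) (r : V → ℕ) : Prop :=
  ∀ x ∈ W, x ≠ ρ → ∃ y ∈ W, G.Adj x y ∧ r y < r x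

lemma isDescending_distIn {W : Finset V} {ρ : V} (h : ∀ x ∈ W, ReachIn G W ρ x) :
    IsDescending G W ρ (distIn G W ρ) := by
  intro x hx hxρ
  obtain ⟨w, hwl, hw⟩ := (h x hx).exists_walk_length_eq_distIn
  obtain ⟨y, hxy, q, hq⟩ := SimpleGraph.Walk.exists_eq_cons_of_ne hxρ w.reverse
  have hqW : ∀ z ∈ q.support, z ∈ W := fun z hz => by
    have : z ∈ w.reverse.support := by simp [hq, hz]
    exact hw z (by simpa using this)
  have hlen : w.length = q.length + 1 := by
    simpa using congrArg SimpleGraph.Walk.length hq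
  refine ⟨y, hqW y q.start_mem_support, hxy, ?_⟩
  calc distIn G W ρ y ≤ q.reverse.length := distIn_le _ (by simpa using hqW)
    _ < distIn G W ρ x := by rw [SimpleGraph.Walk.length_reverse, ← hwl]; omega

lemma IsDescending.apply_root_le {W : Finset V} {ρ : V} {r : V → ℕ}
    (h : IsDescending G W ρ r) : ∀ x ∈ W, r ρ ≤ r x := by
  intro x
  induction hx : r x using Nat.strong_induction_on generalizing x with
  | _ n ih =>
    intro hxW
    by_cases hxρ : x = ρ
    · rw [← hx, hxρ]
    obtain ⟨y, hyW, -, hyx⟩ := h x hxW hxρ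
    exact (ih _ (hx ▸ hyx) y rfl hyW).trans (hx ▸ hyx.le)

lemma IsDescending.isConnSub_filter_lt {W : Finset V} {ρ : V} {r : V → ℕ}
    (h : IsDescending G W ρ r) (hρ : ρ ∈ W) {k : ℕ} (hk : r ρ < k) :
    IsConnSub G (W.filter (r · < k)) := by
  have hρk : ρ ∈ W.filter (r · < k) := mem_filter.2 ⟨hρ, hk⟩
  refine isConnSub_of_reachIn hρk <| ReachIn.of_descent r (Q := {ρ})
    (by simpa using ReachIn.refl hρk) fun z hz hzρ => ?_
  obtain ⟨hzW, hzk⟩ := mem_filter.1 hz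
  obtain ⟨y, hyW, hzy, hyz⟩ := h z hzW (by simpa using hzρ)
  exact ⟨y, mem_filter.2 ⟨hyW, hyz.trans hzk⟩, hzy, hyz⟩

variable [DecidableEq V]

/-- The rank is the distance to `ρ` inside `W`, ties broken by the position in a listing of
`W`. -/
lemma IsConnSub.exists_injOn_isDescending {W : Finset V} (hW : IsConnSub G W) {ρ : V}
    (hρ : ρ ∈ W) : ∃ r : V → ℕ, Set.InjOn r W ∧ IsDescending G W ρ r := by
  have hidx : ∀ x ∈ W, W.toList.idxOf x < #W := fun x hx => by
    simpa using List.idxOf_lt_length_of_mem (mem_toList.2 hx)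
  refine ⟨fun x => distIn G W ρ x * #W + W.toList.idxOf x, fun x hx y hy hxy => ?_, ?_⟩
  · have := congrArg (· % #W) hxy
    simp only [Nat.mul_add_mod_of_lt (hidx x hx), Nat.mul_add_mod_of_lt (hidx y hy)] at this
    exact (List.idxOf_inj (mem_toList.2 hx)).1 this
  · intro x hx hxρ
    obtain ⟨y, hyW, hxy, hyx⟩ :=
      isDescending_distIn (fun x hx => hW.reachIn hρ hx) x hx hxρ
    refine ⟨y, hyW, hxy, ?_⟩
    have := Nat.mul_le_mul_right #W (Nat.succ_le_of_lt hyx)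
    rw [Nat.succ_mul] at this
    have := hidx y hyW
    dsimp only
    omega

/-- The vertex removed is one of `S \ Q` farthest from a point of `Q`. -/
lemma IsConnSub.exists_isConnSub_erase {S Q : Finset V} (hS : IsConnSub G S)
    (hQ : IsConnSub G Q) (hQS : Q ⊆ S) (hne : Q ≠ S) :
    ∃ u ∈ S \ Q, IsConnSub G (S.erase u) := by
  obtain ⟨q, hq⟩ := hQ.nonempty
  have hdesc := isDescending_distIn fun x hx => hS.reachIn (hQS hq) hx
  obtain ⟨u, hu, hmax⟩ := (S \ Q).exists_max_image (distIn G S q)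
    (sdiff_nonempty.2 fun h => hne (hQS.antisymm h))
  obtain ⟨huS, huQ⟩ := mem_sdiff.1 hu
  have hQu : Q ⊆ S.erase u := fun x hx => mem_erase.2 ⟨ne_of_mem_of_not_mem hx huQ, hQS hx⟩
  refine ⟨u, hu, isConnSub_of_reachIn (hQu hq) <| ReachIn.of_descent (distIn G S q)
    (fun x hx => (hQ.reachIn hx hq).mono hQu) fun x hx hxQ => ?_⟩
  obtain ⟨-, hxS⟩ := mem_erase.1 hx
  obtain ⟨y, hyS, hxy, hyx⟩ := hdesc x hxS (ne_of_mem_of_not_mem hq hxQ).symm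
  have hyu : distIn G S q y < distIn G S q u := hyx.trans_le (hmax x (mem_sdiff.2 ⟨hxS, hxQ⟩))
  exact ⟨y, mem_erase.2 ⟨fun h => hyu.ne (congrArg _ h), hyS⟩, hxy, hyx⟩

end Descent

section Exchange

variable {V : Type*} [DecidableEq V] {G : SimpleGraph V}

lemma adjTJ.card_eq {X Y : Finset V} (h : adjTJ G X Y) : #X = #Y := by
  rw [← card_sdiff_add_card_inter X Y, ← card_sdiff_add_card_inter Y X, h.1, h.2, inter_comm]

lemma adjTJ_insert_erase {S : Finset V} {u v : V} (hu : u ∈ S) (hv : v ∉ S) :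
    adjTJ G S (insert v (S.erase u)) := by
  have huv : u ≠ v := ne_of_mem_of_not_mem hu hv
  refine ⟨card_eq_one.2 ⟨u, ?_⟩, card_eq_one.2 ⟨v, ?_⟩⟩ <;> ext x <;>
    simp only [mem_sdiff, mem_insert, mem_erase, mem_singleton] <;> grind

lemma adjTJ.union_left {A X Y : Finset V} (h : adjTJ G X Y) (hX : Disjoint X A)
    (hY : Disjoint Y A) : adjTJ G (A ∪ X) (A ∪ Y) := by
  have key : ∀ {S T : Finset V}, Disjoint S A → (A ∪ S) \ (A ∪ T) = S \ T := fun hS => by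
    ext x
    have : x ∈ _ → x ∉ A := fun h => disjoint_left.1 hS h
    simp only [mem_sdiff, mem_union]
    tauto
  exact ⟨key hX ▸ h.1, key hY ▸ h.2⟩

def connSubsets (G : SimpleGraph V) (W : Finset V) (n : ℕ) : Set (Finset V) :=
  {X | X ⊆ W ∧ IsConnSub G X ∧ #X = n}

def adjTJOn (G : SimpleGraph V) (K : Set (Finset V)) (X Y : Finset V) : Prop :=
  X ∈ K ∧ Y ∈ K ∧ adjTJ G X Y

instance (K : Set (Finset V)) : Std.Symm (adjTJOn G K) :=
  ⟨fun _ _ ⟨hX, hY, h₁, h₂⟩ => ⟨hY, hX, h₂, h₁⟩⟩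

def IsLowerIn (r : V → ℕ) (W S : Finset V) : Prop :=
  ∀ x ∈ S, ∀ y ∈ W, r y < r x → y ∈ S

lemma IsLowerIn.eq {r : V → ℕ} {W S T : Finset V} (hS : IsLowerIn r W S) (hT : IsLowerIn r W T)
    (hr : Set.InjOn r W) (hSW : S ⊆ W) (hTW : T ⊆ W) (hcard : #S = #T) : S = T := by
  by_contra hne
  obtain ⟨s, hsS, hsT⟩ := not_subset.1 fun h => hne (eq_of_subset_of_card_le h hcard.ge)
  obtain ⟨t, htT, htS⟩ := not_subset.1 fun h => hne (eq_of_subset_of_card_le h hcard.le).symm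
  rcases lt_trichotomy (r s) (r t) with h | h | h
  · exact hsT (hT t htT s (hSW hsS) h)
  · exact ne_of_mem_of_not_mem hsS htS (hr (hSW hsS) (hTW htT) h)
  · exact htS (hS s hsS t (hTW htT) h)

lemma IsConnSub.exists_isConnSub_insert_erase {S Q : Finset V} (hS : IsConnSub G S)
    (hQ : IsConnSub G Q) (hQS : Q ⊆ S) (hne : Q ≠ S) {q v : V} (hq : q ∈ Q)
    (hqv : G.Adj q v) : ∃ u ∈ S \ Q, IsConnSub G (insert v (S.erase u)) := by
  obtain ⟨u, hu, hSu⟩ := hS.exists_isConnSub_erase hQ hQS hne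
  have hqu : q ∈ S.erase u := mem_erase.2 ⟨ne_of_mem_of_not_mem hq (mem_sdiff.1 hu).2, hQS hq⟩
  exact ⟨u, hu, hSu.insert_of_adj hqu hqv⟩

lemma exists_isConnSub_insert_erase_of_not_isLowerIn {W S : Finset V} {ρ : V} {r : V → ℕ}
    (hr : Set.InjOn r W) (hdesc : IsDescending G W ρ r) (hS : IsConnSub G S) (hSW : S ⊆ W)
    (hlow : ¬ IsLowerIn r W S) :
    ∃ u ∈ S, ∃ v ∈ W, v ∉ S ∧ r v < r u ∧ IsConnSub G (insert v (S.erase u)) := by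
  by_cases hρS : ρ ∈ S
  · -- bring in the lowest vertex `v` outside `S`, which touches the part `Q` of `W` below it
    simp only [IsLowerIn, not_forall, exists_prop] at hlow
    obtain ⟨x, hxS, y, hyW, hyx, hyS⟩ := hlow
    obtain ⟨v, hv, hvmin⟩ := (W \ S).exists_min_image r ⟨y, mem_sdiff.2 ⟨hyW, hyS⟩⟩
    obtain ⟨hvW, hvS⟩ := mem_sdiff.1 hv
    have hρv : ρ ≠ v := ne_of_mem_of_not_mem hρS hvS
    set Q := W.filter (r · < r v)
    have hQS : Q ⊆ S := fun z hz => by_contra fun hzS =>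
      (mem_filter.1 hz).2.not_ge (hvmin z (mem_sdiff.2 ⟨(mem_filter.1 hz).1, hzS⟩))
    have hQ : IsConnSub G Q := hdesc.isConnSub_filter_lt (hSW hρS)
      ((hdesc.apply_root_le v hvW).lt_of_ne fun h => hρv (hr (hSW hρS) hvW h))
    obtain ⟨p, hpW, hvp, hpv⟩ := hdesc v hvW hρv.symm
    have hxQ : x ∉ Q := fun h =>
      ((hvmin y (mem_sdiff.2 ⟨hyW, hyS⟩)).trans_lt hyx).not_gt (mem_filter.1 h).2
    obtain ⟨u, hu, hconn⟩ := hS.exists_isConnSub_insert_erase hQ hQS (fun h => hxQ (h ▸ hxS))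
      (mem_filter.2 ⟨hpW, hpv⟩) hvp.symm
    obtain ⟨huS, huQ⟩ := mem_sdiff.1 hu
    have hvu : r v ≤ r u := not_lt.1 fun h => huQ (mem_filter.2 ⟨hSW huS, h⟩)
    exact ⟨u, huS, v, hvW, hvS, hvu.lt_of_ne fun h =>
      ne_of_mem_of_not_mem huS hvS (hr (hSW huS) hvW h.symm), hconn⟩
  · -- the lowest vertex `j` of `S` is not the root, so it has a lower neighbour `p` outside `S`
    obtain ⟨j, hjS, hjmin⟩ := S.exists_min_image r hS.nonempty
    obtain ⟨p, hpW, hjp, hpj⟩ := hdesc j (hSW hjS) (ne_of_mem_of_not_mem hjS hρS)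
    have hpS : p ∉ S := fun h => (hjmin p h).not_gt hpj
    by_cases hSj : S = {j}
    · exact ⟨j, hjS, p, hpW, hpS, hpj, by simpa [hSj] using isConnSub_singleton p⟩
    obtain ⟨u, hu, hconn⟩ := hS.exists_isConnSub_insert_erase (isConnSub_singleton j)
      (singleton_subset_iff.2 hjS) (Ne.symm hSj) (mem_singleton_self j) hjp
    have huS := (mem_sdiff.1 hu).1
    exact ⟨u, huS, p, hpW, hpS, hpj.trans_le (hjmin u huS), hconn⟩

lemma exists_isLowerIn_reflTransGen {W S : Finset V} {n : ℕ} {ρ : V} {r : V → ℕ}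
    (hr : Set.InjOn r W) (hdesc : IsDescending G W ρ r) (hS : S ∈ connSubsets G W n) :
    ∃ D ∈ connSubsets G W n, IsLowerIn r W D ∧
      ReflTransGen (adjTJOn G (connSubsets G W n)) S D := by
  induction hs : ∑ x ∈ S, r x using Nat.strong_induction_on generalizing S with
  | _ m ih =>
    by_cases hlow : IsLowerIn r W S
    · exact ⟨S, hS, hlow, .refl⟩
    obtain ⟨hSW, hSc, hSn⟩ := hS
    obtain ⟨u, hu, v, hvW, hvS, hvu, hconn⟩ :=
      exists_isConnSub_insert_erase_of_not_isLowerIn hr hdesc hSc hSW hlow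
    have hSS' : adjTJ G S (insert v (S.erase u)) := adjTJ_insert_erase hu hvS
    have hS' : insert v (S.erase u) ∈ connSubsets G W n :=
      ⟨insert_subset hvW ((erase_subset u S).trans hSW), hconn, hSS'.card_eq ▸ hSn⟩
    have hsum : ∑ x ∈ insert v (S.erase u), r x < m := by
      rw [sum_insert fun h => hvS (mem_of_mem_erase h), ← hs, ← sum_erase_add S r hu]
      omega
    obtain ⟨D, hD, hDlow, hS'D⟩ := ih _ hsum hS' rfl
    exact ⟨D, hD, hDlow, .head ⟨⟨hSW, hSc, hSn⟩, hS', hSS'⟩ hS'D⟩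

theorem IsConnSub.reflTransGen_adjTJOn {W S T : Finset V} {n : ℕ} (hW : IsConnSub G W)
    (hS : S ∈ connSubsets G W n) (hT : T ∈ connSubsets G W n) :
    ReflTransGen (adjTJOn G (connSubsets G W n)) S T := by
  obtain ⟨ρ, hρ⟩ := hW.nonempty
  obtain ⟨r, hr, hdesc⟩ := hW.exists_injOn_isDescending hρ
  obtain ⟨D, hD, hDlow, hSD⟩ := exists_isLowerIn_reflTransGen hr hdesc hS
  obtain ⟨D', hD', hD'low, hTD'⟩ := exists_isLowerIn_reflTransGen hr hdesc hT
  obtain rfl := hDlow.eq hD'low hr hD.1 hD'.1 (hD.2.2.trans hD'.2.2.symm)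
  exact hSD.trans (symm hTD')

end Exchange

lemma Finset.erase_eq_erase_of_sdiff_eq_singleton {α : Type*} [DecidableEq α] {s t : Finset α}
    {a b : α} (ha : s \ t = {a}) (hb : t \ s = {b}) : s.erase a = t.erase b := by
  ext x
  have ha := congrArg (x ∈ ·) ha
  have hb := congrArg (x ∈ ·) hb
  simp only [mem_sdiff, mem_singleton, eq_iff_iff] at ha hb
  simp only [mem_erase]
  tauto

section Components

variable {V : Type*} [Fintype V] [DecidableEq V] {G : SimpleGraph V}

lemma mem_comps_iff {U C : Finset V} :
    C ∈ comps G U ↔ C ⊆ U ∧ IsConnSub G C ∧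
      ∀ D : Finset V, C ⊆ D → D ⊆ U → IsConnSub G D → D = C := by
  simp [comps]

lemma exists_mem_comps {U : Finset V} {v : V} (hv : v ∈ U) : ∃ C ∈ comps G U, v ∈ C := by
  obtain ⟨C, hC, hmax⟩ := (univ.filter fun D : Finset V => v ∈ D ∧ D ⊆ U ∧ IsConnSub G D)
    |>.exists_max_image card ⟨{v}, by simp [hv, isConnSub_singleton]⟩
  simp only [mem_filter, mem_univ, true_and, and_imp] at hC hmax
  refine ⟨C, mem_comps_iff.2 ⟨hC.2.1, hC.2.2, fun D hCD hDU hD => ?_⟩, hC.1⟩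
  exact (eq_of_subset_of_card_le hCD (hmax D (hCD hC.1) hDU hD)).symm

lemma disjoint_of_mem_comps {U C D : Finset V} (hC : C ∈ comps G U) (hD : D ∈ comps G U)
    (hne : C ≠ D) : Disjoint C D := by
  rw [mem_comps_iff] at hC hD
  refine disjoint_left.2 fun a haC haD => hne ?_
  have hCD := hC.2.1.union hD.2.1 haC haD (.refl (mem_union_left _ haC))
  have hU := union_subset hC.1 hD.1
  exact (hC.2.2 _ subset_union_left hU hCD).symm.trans (hD.2.2 _ subset_union_right hU hCD)

lemma not_adj_of_mem_comps {U C : Finset V} (hC : C ∈ comps G U) {x a : V} (hx : x ∈ C)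
    (ha : a ∈ U \ C) : ¬ G.Adj x a := by
  intro hxa
  rw [mem_comps_iff] at hC
  obtain ⟨haU, haC⟩ := mem_sdiff.1 ha
  have := hC.2.2 _ (subset_insert a C) (insert_subset haU hC.1) (hC.2.1.insert_of_adj hx hxa)
  exact haC (this ▸ mem_insert_self a C)

lemma sdiff_eq_biUnion_erase_comps {U C : Finset V} (hC : C ∈ comps G U) :
    U \ C = ((comps G U).erase C).biUnion id := by
  ext x
  simp only [mem_sdiff, mem_biUnion, mem_erase, id]
  constructor
  · rintro ⟨hxU, hxC⟩
    obtain ⟨D, hD, hxD⟩ := exists_mem_comps (G := G) hxU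
    exact ⟨D, ⟨fun h => hxC (h ▸ hxD), hD⟩, hxD⟩
  · rintro ⟨D, ⟨hDC, hD⟩, hxD⟩
    exact ⟨(mem_comps_iff.1 hD).1 hxD, disjoint_left.1 (disjoint_of_mem_comps hD hC hDC) hxD⟩

lemma sdiff_eq_sdiff_of_sdiff_comps_eq_singleton {U U' C C' : Finset V}
    (hC : comps G U \ comps G U' = {C}) (hC' : comps G U' \ comps G U = {C'}) :
    U' \ C' = U \ C := by
  have hCU : C ∈ comps G U := (mem_sdiff.1 (hC ▸ mem_singleton_self C)).1
  have hC'U' : C' ∈ comps G U' := (mem_sdiff.1 (hC' ▸ mem_singleton_self C')).1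
  rw [sdiff_eq_biUnion_erase_comps hCU, sdiff_eq_biUnion_erase_comps hC'U',
    erase_eq_erase_of_sdiff_eq_singleton hC hC']

lemma comps_union_of_isolated {A X : Finset V} (hX : IsConnSub G X) (hXA : Disjoint X A)
    (hiso : ∀ x ∈ X, ∀ a ∈ A, ¬ G.Adj x a) : comps G (A ∪ X) = insert X (comps G A) := by
  have split : ∀ D ⊆ A ∪ X, IsConnSub G D → D ⊆ A ∨ D ⊆ X := by
    intro D hDU hD
    refine or_iff_not_imp_right.2 fun hDX x hxD => by_contra fun hxA => ?_
    obtain ⟨y, hyD, hyX⟩ := not_subset.1 hDX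
    have hxX : x ∈ X := (mem_union.1 (hDU hxD)).resolve_left hxA
    obtain ⟨w, hw⟩ := hD.reachIn hxD hyD
    obtain ⟨d, hd, hd₁, hd₂⟩ := w.exists_boundary_dart X hxX hyX
    have hd₂D := hw _ (w.dart_snd_mem_support_of_mem_darts hd)
    exact hiso _ hd₁ _ ((mem_union.1 (hDU hd₂D)).resolve_right hd₂) d.adj
  ext C
  simp only [mem_insert, mem_comps_iff]
  constructor
  · rintro ⟨hCU, hC, hmax⟩
    rcases split C hCU hC with hCA | hCX
    · exact .inr ⟨hCA, hC, fun D hCD hDA => hmax D hCD (hDA.trans subset_union_left)⟩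
    · exact .inl (hmax X hCX subset_union_right hX).symm
  · rintro (rfl | ⟨hCA, hC, hmax⟩)
    · refine ⟨subset_union_right, hX, fun D hXD hDU hD => ?_⟩
      rcases split D hDU hD with hDA | hDX
      · obtain ⟨x, hx⟩ := hX.nonempty
        exact absurd (hDA (hXD hx)) (disjoint_left.1 hXA hx)
      · exact hDX.antisymm hXD
    · refine ⟨hCA.trans subset_union_left, hC, fun D hCD hDU hD => ?_⟩
      rcases split D hDU hD with hDA | hDX
      · exact hmax D hCD hDA hD
      · obtain ⟨x, hx⟩ := hC.nonempty
        exact absurd (hCA hx) (disjoint_left.1 hXA (hDX (hCD hx)))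

lemma ccMultiset_union_of_isolated {A X : Finset V} (hX : IsConnSub G X) (hXA : Disjoint X A)
    (hiso : ∀ x ∈ X, ∀ a ∈ A, ¬ G.Adj x a) :
    ccMultiset G (A ∪ X) = #X ::ₘ ccMultiset G A := by
  have hXA' : X ∉ comps G A := fun h => by
    obtain ⟨x, hx⟩ := hX.nonempty
    exact disjoint_left.1 hXA hx ((mem_comps_iff.1 h).1 hx)
  rw [ccMultiset, comps_union_of_isolated hX hXA hiso, insert_val_of_notMem hXA',
    Multiset.map_cons, ccMultiset]

end Components

section Reconfiguration

variable {V : Type*} [Fintype V] [DecidableEq V] {G : SimpleGraph V} {M : Multiset ℕ}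

def reconfStep (G : SimpleGraph V) (M : Multiset ℕ) (R : Finset V → Finset V → Prop)
    (U U' : Finset V) : Prop :=
  R U U' ∧ ccMultiset G U' = M

lemma reconf_iff {R : Finset V → Finset V → Prop} {A B : Finset V} :
    Reconf G M R A B ↔ ccMultiset G A = M ∧ ReflTransGen (reconfStep G M R) A B := by
  constructor
  · rintro ⟨ℓ, W, rfl, rfl, hM, hR⟩
    refine ⟨hM 0 ℓ.zero_le, ?_⟩
    suffices ∀ k ≤ ℓ, ReflTransGen (reconfStep G M R) (W 0) (W k) from this ℓ le_rfl
    intro k hk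
    induction k with
    | zero => exact .refl
    | succ k ih => exact (ih (by omega)).tail ⟨hR k hk, hM _ hk⟩
  · rintro ⟨hA, hAB⟩
    induction hAB with
    | refl => exact ⟨0, fun _ => A, rfl, rfl, fun _ _ => hA, fun _ h => absurd h (by omega)⟩
    | @tail b c _ hbc ih =>
      obtain ⟨ℓ, W, h0, hℓ, hM, hR⟩ := ih
      have hW : ∀ i ≤ ℓ, Function.update W (ℓ + 1) c i = W i := fun i hi =>
        Function.update_of_ne (by omega) _ _
      refine ⟨ℓ + 1, Function.update W (ℓ + 1) c, (hW 0 ℓ.zero_le).trans h0,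
        Function.update_self .., fun i hi => ?_, fun i hi => ?_⟩
      · rcases Nat.le_succ_iff.1 hi with hi | rfl
        · exact (hW i hi).symm ▸ hM i hi
        · rw [Function.update_self]
          exact hbc.2
      · rcases Nat.lt_succ_iff_lt_or_eq.1 hi with hi | rfl
        · rw [hW i hi.le, hW (i + 1) hi]
          exact hR i hi
        · rw [hW i le_rfl, hℓ, Function.update_self]
          exact hbc.1

lemma reflTransGen_adjTJ_of_adjCS {U U' : Finset V} (h : adjCS G U U')
    (hU' : ccMultiset G U' = M) : ReflTransGen (reconfStep G M (adjTJ G)) U U' := by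
  obtain ⟨⟨hUU', hC, hC'⟩, hslide⟩ := h
  obtain ⟨C, hC⟩ := card_eq_one.1 hC
  obtain ⟨C', hC'⟩ := card_eq_one.1 hC'
  have hCmem : C ∈ comps G U \ comps G U' := hC ▸ mem_singleton_self C
  have hC'mem : C' ∈ comps G U' \ comps G U := hC' ▸ mem_singleton_self C'
  have hCU := (mem_sdiff.1 hCmem).1
  have hC'U' := (mem_sdiff.1 hC'mem).1
  obtain ⟨hCsub, hCconn, -⟩ := mem_comps_iff.1 hCU
  obtain ⟨hC'sub, hC'conn, -⟩ := mem_comps_iff.1 hC'U'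
  have hA : U' \ C' = U \ C := sdiff_eq_sdiff_of_sdiff_comps_eq_singleton hC hC'
  set A := U \ C
  have hU : A ∪ C = U := sdiff_union_of_subset hCsub
  have hU'' : A ∪ C' = U' := hA ▸ sdiff_union_of_subset hC'sub
  have hdisj : Disjoint (C ∪ C') A :=
    disjoint_union_left.2 ⟨disjoint_sdiff, hA ▸ disjoint_sdiff⟩
  have hiso : ∀ x ∈ C ∪ C', ∀ a ∈ A, ¬ G.Adj x a := by
    intro x hx a ha
    rcases mem_union.1 hx with hx | hx
    · exact not_adj_of_mem_comps hCU hx ha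
    · exact not_adj_of_mem_comps hC'U' hx (hA ▸ ha)
  have hmul : ∀ X ⊆ C ∪ C', IsConnSub G X →
      ccMultiset G (A ∪ X) = #X ::ₘ ccMultiset G A :=
    fun X hX hXc =>
      ccMultiset_union_of_isolated hXc (hdisj.mono_left hX) fun x hx => hiso x (hX hx)
  have hcard : #C' = #C := by
    rw [← hU, ← hU'', hmul C subset_union_left hCconn, hmul C' subset_union_right hC'conn]
      at hUU'
    exact ((Multiset.cons_inj_left _).1 hUU').symm
  have hM : ∀ X ∈ connSubsets G (C ∪ C') #C, ccMultiset G (A ∪ X) = M := by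
    rintro X ⟨hX, hXc, hXn⟩
    rw [hmul X hX hXc, hXn, ← hmul C subset_union_left hCconn, hU, hUU', hU']
  have hchain := (hslide C hCmem C' hC'mem).reflTransGen_adjTJOn
    ⟨subset_union_left, hCconn, rfl⟩ ⟨subset_union_right, hC'conn, hcard⟩
  rw [← hU, ← hU'']
  exact ReflTransGen.lift (A ∪ ·) (fun X Y ⟨hX, hY, hXY⟩ =>
    ⟨hXY.union_left (hdisj.mono_left hX.1) (hdisj.mono_left hY.1), hM Y hY⟩) _ _ hchain

end Reconfiguration

theorem stmt1_general {V : Type*} [Fintype V] [DecidableEq V] (G : SimpleGraph V)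
    (M : Multiset ℕ) (A B : Finset V)
    (h : Reconf G M (adjCS G) A B) :
    Reconf G M (adjCJ G) A B ∧ Reconf G M (adjTJ G) A B := by
  obtain ⟨hA, hAB⟩ := reconf_iff.1 h
  have hCJ : ReflTransGen (reconfStep G M (adjCJ G)) A B :=
    ReflTransGen.mono (fun _ _ h => ⟨h.1.1, h.2⟩) _ _ hAB
  have hTJ : ReflTransGen (reconfStep G M (adjTJ G)) A B :=
    reflTransGen_closed (fun _ _ h => reflTransGen_adjTJ_of_adjCS h.1 h.2) _ _ hAB
  exact ⟨reconf_iff.2 ⟨hA, hCJ⟩, reconf_iff.2 ⟨hA, hTJ⟩⟩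

/-- Reconfigurability under CS implies reconfigurability under CJ and under TJ. -/
theorem stmt1 {V : Type*} [Fintype V] [DecidableEq V] (G : SimpleGraph V)
    (M : Multiset ℕ) (A B : Finset V)
    (hA : ccMultiset G A = M) (hB : ccMultiset G B = M)
    (h : Reconf G M (adjCS G) A B) :
    Reconf G M (adjCJ G) A B ∧ Reconf G M (adjTJ G) A B :=
  stmt1_general G M A B h
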